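/- Let f(t) − r(t) denote the gap between front and rear cars in the same-direction kinematic model, with initial gap d₀ strictly greater than d_min = [v_r·ρ + a_acc·ρ²/2 + (v_r+ρ·a_acc)²/(2·a_min) − v_f²/(2·a_max)]₊. Then f(t) − r(t) > 0 for all t ≥ 0 (no collision ever occurs). -/

import Mathlib

/-!
If the rear car is never faster than the front car on `[0, t]`, the gap at time `t` is at least
`d₀`. Otherwise the rear car catches up in speed at some `s ≤ t` and stays at least as fast,
because the front car brakes harder (`a_min < a_max`). Then the remaining braking distance
`vF(t)²/(2 a_max)` of the front car is at most the rear car's `vR(t)²/(2 a_min)`, so the gap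
`f(t) - r(t)` is at least the difference of the two stopping positions,
`d₀ + v_f²/(2 a_max) - d_R`: the rear car's stopping position `r(t) + vR(t)²/(2 a_min)` is
nondecreasing while it accelerates and constant while it brakes, so it never exceeds `d_R`.
-/

open intervalIntegral

def brakingVelocity (c a t : ℝ) : ℝ := max 0 (c - a * t)

theorem continuous_brakingVelocity (c a : ℝ) : Continuous (brakingVelocity c a) := by
  unfold brakingVelocity; fun_prop

theorem integral_const_add_mul (b m t : ℝ) :
    ∫ s in (0:ℝ)..t, (b + m * s) = b * t + m * t ^ 2 / 2 := by
  rw [integral_add intervalIntegrable_const ((continuous_const_mul m).intervalIntegrable _ _),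
    integral_const_mul, integral_id, intervalIntegral.integral_const, smul_eq_mul]
  ring

theorem integral_max_zero (y : ℝ) : ∫ u in (0:ℝ)..y, max 0 u = max 0 y ^ 2 / 2 := by
  rcases le_total 0 y with hy | hy
  · have h : Set.EqOn (fun u : ℝ => max 0 u) (fun u => u) (Set.uIcc 0 y) := fun u hu =>
      max_eq_right (Set.uIcc_of_le hy ▸ hu).1
    rw [integral_congr h, integral_id, max_eq_right hy]
    ring
  · have h : Set.EqOn (fun u : ℝ => max 0 u) 0 (Set.uIcc 0 y) := fun u hu =>
      max_eq_left (Set.uIcc_of_ge hy ▸ hu).2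
    rw [integral_congr h, max_eq_left hy]
    simp

theorem integral_brakingVelocity (c t : ℝ) {a : ℝ} (ha : a ≠ 0) :
    ∫ s in (0:ℝ)..t, brakingVelocity c a s =
      (max 0 c ^ 2 - brakingVelocity c a t ^ 2) / (2 * a) := by
  have hint : ∀ x y : ℝ, IntervalIntegrable (fun u : ℝ => max 0 u) MeasureTheory.volume x y :=
    fun x y => (continuous_const.max continuous_id).intervalIntegrable x y
  unfold brakingVelocity
  rw [integral_comp_sub_mul (fun u => max 0 u) ha, mul_zero, sub_zero,
    ← integral_interval_sub_left (hint 0 c) (hint 0 _), integral_max_zero, integral_max_zero,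
    smul_eq_mul]
  field_simp

theorem brakingVelocity_brakingVelocity {c a s t : ℝ} (ha : 0 ≤ a) (hst : s ≤ t) :
    brakingVelocity (brakingVelocity c a s) a (t - s) = brakingVelocity c a t := by
  unfold brakingVelocity
  rcases le_total 0 (c - a * s) with h | h
  · rw [max_eq_right h]
    ring_nf
  · have hct : c - a * t ≤ 0 := by nlinarith
    rw [max_eq_left h, max_eq_left hct, max_eq_left (by nlinarith)]

theorem brakingVelocity_mono {c c' a a' t : ℝ} (hc : c ≤ c') (ha : a' ≤ a) (ht : 0 ≤ t) :
    brakingVelocity c a t ≤ brakingVelocity c' a' t := by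
  unfold brakingVelocity
  gcongr

noncomputable def rearVelocity (v ρ a_acc a_min t : ℝ) : ℝ :=
  if t ≤ ρ then v + a_acc * t else brakingVelocity (v + ρ * a_acc) a_min (t - ρ)

noncomputable def rearStoppingDistance (v ρ a_acc a_min : ℝ) : ℝ :=
  v * ρ + a_acc * ρ ^ 2 / 2 + (v + ρ * a_acc) ^ 2 / (2 * a_min)

section Rear

variable {v ρ a_acc a_min : ℝ}

theorem rearVelocity_of_ge (hv : 0 ≤ v + ρ * a_acc) {t : ℝ} (ht : ρ ≤ t) :
    rearVelocity v ρ a_acc a_min t = brakingVelocity (v + ρ * a_acc) a_min (t - ρ) := by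
  rcases ht.eq_or_lt with rfl | hlt
  · rw [rearVelocity, if_pos le_rfl, sub_self, brakingVelocity, mul_zero, sub_zero,
      max_eq_right hv, mul_comm]
  · exact if_neg hlt.not_ge

theorem continuous_rearVelocity (h : 0 ≤ v + ρ * a_acc) :
    Continuous (rearVelocity v ρ a_acc a_min) := by
  refine Continuous.if_le (by fun_prop) ((continuous_brakingVelocity _ _).comp (by fun_prop))
    continuous_id continuous_const fun t ht => ?_
  simpa [rearVelocity, ht] using rearVelocity_of_ge (a_min := a_min) h ht.ge

theorem brakingVelocity_le_rearVelocity (hv : 0 ≤ v) (hacc : 0 ≤ a_acc) (hmin : 0 ≤ a_min)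
    {s t : ℝ} (hst : s ≤ t) (ht : 0 ≤ t) :
    brakingVelocity (rearVelocity v ρ a_acc a_min s) a_min (t - s) ≤
      rearVelocity v ρ a_acc a_min t := by
  unfold rearVelocity
  split_ifs with hs htρ htρ
  · unfold brakingVelocity
    exact max_le (by positivity) (by nlinarith)
  · unfold brakingVelocity
    exact max_le_max le_rfl (by nlinarith)
  · linarith
  · rw [← sub_sub_sub_cancel_right t s ρ, brakingVelocity_brakingVelocity hmin (by linarith)]

theorem integral_rearVelocity_of_le (hρ : 0 ≤ ρ) {t : ℝ} (ht : t ≤ ρ) :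
    ∫ s in (0:ℝ)..t, rearVelocity v ρ a_acc a_min s = v * t + a_acc * t ^ 2 / 2 := by
  have h : Set.EqOn (rearVelocity v ρ a_acc a_min) (fun s => v + a_acc * s) (Set.uIcc 0 t) :=
    fun s hs => if_pos ((Set.mem_uIcc.1 hs).elim (fun h => h.2.trans ht) fun h => h.2.trans hρ)
  rw [integral_congr h, integral_const_add_mul]

theorem integral_rearVelocity_of_ge (hv : 0 ≤ v + ρ * a_acc) (hρ : 0 ≤ ρ) (hmin : a_min ≠ 0)
    {t : ℝ} (ht : ρ ≤ t) :
    ∫ s in (0:ℝ)..t, rearVelocity v ρ a_acc a_min s =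
      rearStoppingDistance v ρ a_acc a_min - rearVelocity v ρ a_acc a_min t ^ 2 / (2 * a_min) := by
  have hcont := continuous_rearVelocity (a_min := a_min) hv
  have h : Set.EqOn (rearVelocity v ρ a_acc a_min)
      (fun s => brakingVelocity (v + ρ * a_acc) a_min (s - ρ)) (Set.uIcc ρ t) :=
    fun s hs => rearVelocity_of_ge hv (Set.uIcc_of_le ht ▸ hs).1
  rw [← integral_add_adjacent_intervals (hcont.intervalIntegrable 0 ρ)
      (hcont.intervalIntegrable ρ t), integral_rearVelocity_of_le hρ le_rfl, integral_congr h,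
    integral_comp_sub_right (brakingVelocity _ _), sub_self, integral_brakingVelocity _ _ hmin,
    max_eq_right hv, rearVelocity_of_ge hv ht, rearStoppingDistance]
  ring

theorem integral_rearVelocity_add_sq_div_le (hv : 0 ≤ v) (hacc : 0 ≤ a_acc) (hρ : 0 ≤ ρ)
    (hmin : 0 < a_min) {t : ℝ} (ht : 0 ≤ t) :
    (∫ s in (0:ℝ)..t, rearVelocity v ρ a_acc a_min s) +
      rearVelocity v ρ a_acc a_min t ^ 2 / (2 * a_min) ≤ rearStoppingDistance v ρ a_acc a_min := by
  rcases le_total t ρ with htρ | hρt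
  · have hvt : (v + a_acc * t) ^ 2 ≤ (v + ρ * a_acc) ^ 2 :=
      pow_le_pow_left₀ (by positivity) (by nlinarith) 2
    rw [integral_rearVelocity_of_le hρ htρ, rearVelocity, if_pos htρ, rearStoppingDistance]
    gcongr v * ?_ + a_acc * ?_ ^ 2 / 2 + ?_ / _
  · have hvρ : 0 ≤ v + ρ * a_acc := by positivity
    rw [integral_rearVelocity_of_ge hvρ hρ hmin.ne' hρt, sub_add_cancel]

theorem brakingVelocity_le_rearVelocity_of_le (hv : 0 ≤ v) (hacc : 0 ≤ a_acc)
    (hmin : 0 ≤ a_min) {a c s t : ℝ} (ha : a_min ≤ a)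
    (hs : brakingVelocity c a s ≤ rearVelocity v ρ a_acc a_min s) (hst : s ≤ t) (ht : 0 ≤ t) :
    brakingVelocity c a t ≤ rearVelocity v ρ a_acc a_min t :=
  calc brakingVelocity c a t = brakingVelocity (brakingVelocity c a s) a (t - s) :=
        (brakingVelocity_brakingVelocity (hmin.trans ha) hst).symm
    _ ≤ brakingVelocity (rearVelocity v ρ a_acc a_min s) a_min (t - s) :=
        brakingVelocity_mono hs ha (sub_nonneg.2 hst)
    _ ≤ rearVelocity v ρ a_acc a_min t := brakingVelocity_le_rearVelocity hv hacc hmin hst ht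

end Rear

/-- If the initial gap exceeds the minimal safe longitudinal distance, the gap between the
front and rear cars remains strictly positive at all times: no collision ever occurs. -/
theorem no_collision_of_safe_distance (v_r v_f ρ a_acc a_min a_max d₀ : ℝ)
    (hvr : 0 ≤ v_r) (hvf : 0 ≤ v_f) (hρ : 0 < ρ)
    (hacc : 0 ≤ a_acc) (hmin : 0 < a_min) (hlt : a_min < a_max)
    (vR : ℝ → ℝ) (vF : ℝ → ℝ) (r f : ℝ → ℝ)
    (hvR : vR = fun t => if t ≤ ρ then v_r + a_acc * t
        else max 0 (v_r + ρ * a_acc - a_min * (t - ρ)))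
    (hvF : vF = fun t => max 0 (v_f - a_max * t))
    (hr : r = fun t => ∫ s in (0:ℝ)..t, vR s)
    (hf : f = fun t => d₀ + ∫ s in (0:ℝ)..t, vF s)
    (hd : d₀ > max (v_r * ρ + a_acc * ρ ^ 2 / 2 +
        (v_r + ρ * a_acc) ^ 2 / (2 * a_min) - v_f ^ 2 / (2 * a_max)) 0) :
    ∀ t, 0 ≤ t → f t - r t > 0 := by
  subst hr hf
  change vR = rearVelocity v_r ρ a_acc a_min at hvR
  change vF = brakingVelocity v_f a_max at hvF
  change d₀ > max (rearStoppingDistance v_r ρ a_acc a_min - v_f ^ 2 / (2 * a_max)) 0 at hd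
  subst hvR hvF
  intro t ht
  have hmax : 0 < a_max := hmin.trans hlt
  by_cases hcross : ∃ s ∈ Set.Icc 0 t,
      brakingVelocity v_f a_max s ≤ rearVelocity v_r ρ a_acc a_min s
  · obtain ⟨s, ⟨-, hst⟩, hs⟩ := hcross
    have hvt : brakingVelocity v_f a_max t ≤ rearVelocity v_r ρ a_acc a_min t :=
      brakingVelocity_le_rearVelocity_of_le hvr hacc hmin.le hlt.le hs hst ht
    have hsq : brakingVelocity v_f a_max t ^ 2 / (2 * a_max) ≤
        rearVelocity v_r ρ a_acc a_min t ^ 2 / (2 * a_min) := by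
      gcongr
      exact le_max_left _ _
    have hstop := integral_rearVelocity_add_sq_div_le (a_min := a_min) hvr hacc hρ.le hmin ht
    simp only [integral_brakingVelocity v_f t hmax.ne', max_eq_right hvf, sub_div]
    linarith [le_max_left (rearStoppingDistance v_r ρ a_acc a_min - v_f ^ 2 / (2 * a_max)) 0]
  · push Not at hcross
    have hcont := continuous_rearVelocity (a_min := a_min) (by positivity : 0 ≤ v_r + ρ * a_acc)
    have hrear := integral_mono_on (μ := MeasureTheory.volume) ht (hcont.intervalIntegrable 0 t)
      ((continuous_brakingVelocity _ _).intervalIntegrable 0 t) fun s hs => (hcross s hs).le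
    beta_reduce
    linarith [le_max_right (rearStoppingDistance v_r ρ a_acc a_min - v_f ^ 2 / (2 * a_max)) 0]
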